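/- arXiv:2206.02477 — 2 statements merged into one kernel-verified Lean document; each statement's English description precedes it below -/
import Mathlib

section
/- Let n ≥ 1 and let 𝒫₁, …, 𝒫ₙ be nonempty sets of Borel probability measures on [0,∞), each containing only measures with finite mean. Let T be the robust thresholds associated with 𝒫₁, …, 𝒫ₙ. Let r_i : [0,∞)^i → [0,1], i = 1,…,n, be Borel measurable functions (a randomized stopping rule), and define the payoff function g(x₁,…,xₙ) = Σ_{i=1}^n xᵢ · rᵢ(x₁,…,xᵢ) · Π_{j<i} (1 − r_j(x₁,…,x_j)). Then the infimum, over all choices of Pᵢ ∈ 𝒫ᵢ (i = 1,…,n), of ∫ g d(P₁ ⊗ ⋯ ⊗ Pₙ) is at most T(0). -/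
open MeasureTheory

/-- Backward robust thresholds: `robustTAux Ps n k = T(n - k)`, where
`T(n) = 0` and `T(i) = inf_{P ∈ Ps (i+1)} ∫ max (T (i+1)) x dP`. -/
noncomputable def robustTAux (Ps : ℕ → Set (Measure ℝ)) (n : ℕ) : ℕ → ℝ
  | 0 => 0
  | k + 1 => sInf ((fun P => ∫ x, max (robustTAux Ps n k) x ∂P) '' Ps (n - k))

/-- The robust threshold `T(i)` for `0 ≤ i ≤ n`. -/
noncomputable def robustT (Ps : ℕ → Set (Measure ℝ)) (n i : ℕ) : ℝ :=
  robustTAux Ps n (n - i)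

/-! Nature answers any stopping rule by picking each `Pᵢ₊₁ ∈ 𝒫ᵢ₊₁` within `δ` of the infimum
defining `T(i)`. Given the offer `x` at stage `i + 1`, the payoff from there on is a mixture of `x`
and the payoff from the later stages, with the acceptance probability as weight; since the rule is
adapted, this weight does not depend on the later offers, whose contribution has mean at most
`T(i+1) + (n-i-1)δ` by backward induction. So the conditional mean is at most
`max (T(i+1) + (n-i-1)δ) x`, whose `Pᵢ₊₁`-mean is at most `T(i) + (n-i)δ`; let `δ → 0`. -/

theorem Fin.prod_Iio_succ {M : Type*} [CommMonoid M] {n : ℕ} (f : Fin (n + 1) → M) (i : Fin n) :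
    ∏ k ∈ Finset.Iio i.succ, f k = f 0 * ∏ k ∈ Finset.Iio i, f k.succ := by
  rw [← Finset.Ico_bot, bot_eq_zero, ← Finset.Ioo_insert_left i.succ_pos,
    Finset.prod_insert (by simp), ← Fin.finsetImage_succ_Iio,
    Finset.prod_image (Fin.succ_injective n).injOn]

section FubiniFinSucc

variable {E : Type*} [MeasurableSpace E] {n : ℕ} (μ : Fin (n + 1) → Measure E)
  [∀ i, SigmaFinite (μ i)]

theorem MeasurableEquiv.piFinSuccAbove_zero_symm_apply (z : E × (Fin n → E)) :
    (MeasurableEquiv.piFinSuccAbove (fun _ => E) 0).symm z = Fin.cons z.1 z.2 := by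
  simp [MeasurableEquiv.piFinSuccAbove_symm_apply, Fin.insertNthEquiv]

theorem MeasureTheory.Integrable.comp_finCons {f : (Fin (n + 1) → E) → ℝ}
    (hf : Integrable f (Measure.pi μ)) :
    Integrable (fun z : E × (Fin n → E) => f (Fin.cons z.1 z.2))
      ((μ 0).prod (Measure.pi fun j => μ j.succ)) := by
  have := ((measurePreserving_piFinSuccAbove μ 0).symm.integrable_comp_emb
    (MeasurableEquiv.measurableEmbedding _)).mpr hf
  simpa only [Function.comp_def, MeasurableEquiv.piFinSuccAbove_zero_symm_apply,
    Fin.zero_succAbove] using this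

theorem integral_pi_eq_integral_integral_finCons {f : (Fin (n + 1) → E) → ℝ}
    (hf : Integrable f (Measure.pi μ)) :
    ∫ x, f x ∂Measure.pi μ = ∫ a, ∫ y, f (Fin.cons a y) ∂Measure.pi (fun j => μ j.succ) ∂μ 0 := by
  rw [← (measurePreserving_piFinSuccAbove μ 0).symm.integral_comp']
  simp only [MeasurableEquiv.piFinSuccAbove_zero_symm_apply]
  exact integral_prod _ (hf.comp_finCons μ)

theorem measurable_finCons (a : E) :
    Measurable fun y : Fin n → E => (Fin.cons a y : Fin (n + 1) → E) := by
  simpa only [Function.comp_def, MeasurableEquiv.piFinSuccAbove_zero_symm_apply] using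
    (MeasurableEquiv.piFinSuccAbove (fun _ => E) 0).symm.measurable.comp measurable_prodMk_left

end FubiniFinSucc

theorem integral_max_add_le {P : Measure ℝ} [IsProbabilityMeasure P]
    (hP : Integrable (fun x : ℝ => x) P) (c : ℝ) {d : ℝ} (hd : 0 ≤ d) :
    ∫ x, max (c + d) x ∂P ≤ ∫ x, max c x ∂P + d := by
  have hmax : Integrable (fun x => max c x) P := (integrable_const c).sup hP
  calc ∫ x, max (c + d) x ∂P ≤ ∫ x, (max c x + d) ∂P :=
        integral_mono ((integrable_const _).sup hP) (hmax.add (integrable_const d))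
          fun x => max_le (by linarith [le_max_left c x])
            (le_add_of_le_of_nonneg (le_max_right c x) hd)
    _ = ∫ x, max c x ∂P + d := by simp [integral_add hmax (integrable_const d)]

theorem Real.sInf_le_of_forall_exists_lt {s : Set ℝ} {a : ℝ} (ha : 0 ≤ a)
    (h : s.Nonempty → ∀ ε, 0 < ε → ∃ x ∈ s, x < a + ε) : sInf s ≤ a := by
  rcases s.eq_empty_or_nonempty with rfl | hs
  · simpa using ha
  by_cases hb : BddBelow s
  · exact (Real.sInf_le_iff hb hs).2 (h hs)
  · rwa [Real.sInf_of_not_bddBelow hb]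

/-- `r i x` is the probability of accepting offer `i`, which sits in coordinate `i - 1` of `x`. -/
structure IsStoppingRule (n : ℕ) (r : ℕ → (Fin n → ℝ) → ℝ) : Prop where
  measurable : ∀ i, Measurable (r i)
  nonneg : ∀ i x, 0 ≤ r i x
  le_one : ∀ i x, r i x ≤ 1
  adapted : ∀ i (x y : Fin n → ℝ), (∀ j : Fin n, j.1 + 1 ≤ i → x j = y j) → r i x = r i y

noncomputable def payoff (n : ℕ) (r : ℕ → (Fin n → ℝ) → ℝ) (x : Fin n → ℝ) : ℝ :=
  ∑ j : Fin n, x j * r (j.1 + 1) x * ∏ k ∈ Finset.Iio j, (1 - r (k.1 + 1) x)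

/-- The rule on the remaining offers once the first offer `a` has been rejected. -/
def tailRule {n : ℕ} (r : ℕ → (Fin (n + 1) → ℝ) → ℝ) (a : ℝ) : ℕ → (Fin n → ℝ) → ℝ :=
  fun i y => r (i + 1) (Fin.cons a y)

theorem IsStoppingRule.tailRule {n : ℕ} {r : ℕ → (Fin (n + 1) → ℝ) → ℝ}
    (hr : IsStoppingRule (n + 1) r) (a : ℝ) : IsStoppingRule n (tailRule r a) where
  measurable i := (hr.measurable (i + 1)).comp (measurable_finCons a)
  nonneg i _ := hr.nonneg (i + 1) _
  le_one i _ := hr.le_one (i + 1) _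
  adapted i y z h := hr.adapted (i + 1) _ _ fun j hj => by
    cases j using Fin.cases with
    | zero => rfl
    | succ j => exact h j (by simpa using hj)

theorem IsStoppingRule.apply_one_cons {n : ℕ} {r : ℕ → (Fin (n + 1) → ℝ) → ℝ}
    (hr : IsStoppingRule (n + 1) r) (a : ℝ) (y : Fin n → ℝ) :
    r 1 (Fin.cons a y) = r 1 (Fin.cons a 0) :=
  hr.adapted 1 _ _ fun j hj => by
    cases j using Fin.cases with
    | zero => rfl
    | succ j => simp at hj

theorem payoff_cons {n : ℕ} (r : ℕ → (Fin (n + 1) → ℝ) → ℝ) (a : ℝ) (y : Fin n → ℝ) :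
    payoff (n + 1) r (Fin.cons a y) =
      a * r 1 (Fin.cons a y) + (1 - r 1 (Fin.cons a y)) * payoff n (tailRule r a) y := by
  simp only [payoff, Fin.sum_univ_succ, Fin.prod_Iio_succ, Finset.mul_sum, tailRule, Fin.cons_zero,
    Fin.cons_succ, Fin.val_zero, Fin.val_succ]
  congr 1
  · simp [show Finset.Iio (0 : Fin (n + 1)) = ∅ from Finset.Iio_bot]
  · refine Finset.sum_congr rfl fun j _ => ?_
    ring

theorem measurable_payoff {n : ℕ} {r : ℕ → (Fin n → ℝ) → ℝ} (hr : ∀ i, Measurable (r i)) :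
    Measurable (payoff n r) :=
  Finset.measurable_sum _ fun j _ => ((measurable_pi_apply j).mul (hr _)).mul
    (Finset.measurable_prod _ fun _ _ => measurable_const.sub (hr _))

theorem abs_payoff_le {n : ℕ} {r : ℕ → (Fin n → ℝ) → ℝ} (h0 : ∀ i x, 0 ≤ r i x)
    (h1 : ∀ i x, r i x ≤ 1) (x : Fin n → ℝ) : |payoff n r x| ≤ ∑ j, |x j| := by
  refine (Finset.abs_sum_le_sum_abs _ _).trans (Finset.sum_le_sum fun j _ => ?_)
  have hr : |r (j.1 + 1) x| ≤ 1 := abs_le.mpr ⟨by linarith [h0 (j.1 + 1) x], h1 _ x⟩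
  have hprod : |∏ k ∈ Finset.Iio j, (1 - r (k.1 + 1) x)| ≤ 1 := by
    rw [Finset.abs_prod]
    exact Finset.prod_le_one (fun _ _ => abs_nonneg _) fun k _ =>
      abs_le.mpr ⟨by linarith [h1 (k.1 + 1) x], by linarith [h0 (k.1 + 1) x]⟩
  calc |x j * r (j.1 + 1) x * ∏ k ∈ Finset.Iio j, (1 - r (k.1 + 1) x)|
      ≤ |x j| * 1 * 1 := by rw [abs_mul, abs_mul]; gcongr
    _ = |x j| := by ring

theorem integrable_payoff {n : ℕ} (Q : Fin n → Measure ℝ) [∀ j, IsProbabilityMeasure (Q j)]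
    (hQ : ∀ j, Integrable (fun x : ℝ => x) (Q j)) {r : ℕ → (Fin n → ℝ) → ℝ}
    (hm : ∀ i, Measurable (r i)) (h0 : ∀ i x, 0 ≤ r i x) (h1 : ∀ i x, r i x ≤ 1) :
    Integrable (payoff n r) (Measure.pi Q) := by
  have hcoord (j : Fin n) : Integrable (fun x : Fin n → ℝ => x j) (Measure.pi Q) :=
    (measurePreserving_eval Q j).integrable_comp_of_integrable (hQ j)
  refine (integrable_finsetSum Finset.univ fun j _ => (hcoord j).abs).mono'
    (measurable_payoff hm).aestronglyMeasurable (Filter.Eventually.of_forall fun x => ?_)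
  simpa [Real.norm_eq_abs] using abs_payoff_le h0 h1 x

theorem integral_payoff_cons_le {n : ℕ} {r : ℕ → (Fin (n + 1) → ℝ) → ℝ}
    (hr : IsStoppingRule (n + 1) r) {ν : Measure (Fin n → ℝ)} [IsProbabilityMeasure ν] (a : ℝ)
    {c : ℝ} (hint : Integrable (payoff n (tailRule r a)) ν)
    (hc : ∫ y, payoff n (tailRule r a) y ∂ν ≤ c) :
    ∫ y, payoff (n + 1) r (Fin.cons a y) ∂ν ≤ max c a := by
  have hsplit : ∫ y, payoff (n + 1) r (Fin.cons a y) ∂ν =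
      a * r 1 (Fin.cons a 0) + (1 - r 1 (Fin.cons a 0)) * ∫ y, payoff n (tailRule r a) y ∂ν := by
    simp_rw [payoff_cons, hr.apply_one_cons a]
    rw [integral_add (integrable_const _) (hint.const_mul _), integral_const, integral_const_mul]
    simp
  rw [hsplit]
  have hρ0 : 0 ≤ r 1 (Fin.cons a 0) := hr.nonneg 1 _
  have hρ1 : 0 ≤ 1 - r 1 (Fin.cons a 0) := sub_nonneg.mpr (hr.le_one 1 _)
  linarith [mul_le_mul_of_nonneg_right (le_max_right c a) hρ0,
    mul_le_mul_of_nonneg_left (hc.trans (le_max_left c a)) hρ1]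

theorem integral_payoff_le_of_supersolution {n : ℕ} (Q : Fin n → Measure ℝ)
    [∀ j, IsProbabilityMeasure (Q j)] (hQ : ∀ j, Integrable (fun x : ℝ => x) (Q j))
    {r : ℕ → (Fin n → ℝ) → ℝ} (hr : IsStoppingRule n r) {t : ℕ → ℝ} (htn : 0 ≤ t n)
    (ht : ∀ j : Fin n, ∫ x, max (t (j + 1)) x ∂Q j ≤ t j) :
    ∫ x, payoff n r x ∂Measure.pi Q ≤ t 0 := by
  induction n generalizing t with
  | zero => simpa [payoff] using htn
  | succ n ih =>
    have hint := integrable_payoff Q hQ hr.measurable hr.nonneg hr.le_one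
    have htail (a : ℝ) :
        ∫ y, payoff n (tailRule r a) y ∂Measure.pi (fun j => Q j.succ) ≤ t 1 :=
      ih (fun j => Q j.succ) (fun j => hQ j.succ) (hr.tailRule a) (t := fun i => t (i + 1))
        htn fun j => by simpa using ht j.succ
    rw [integral_pi_eq_integral_integral_finCons Q hint]
    calc _ ≤ ∫ a, max (t 1) a ∂Q 0 :=
          integral_mono (hint.comp_finCons Q).integral_prod_left
            ((integrable_const _).sup (hQ 0)) fun a =>
              integral_payoff_cons_le hr a (integrable_payoff _ (fun j => hQ j.succ)
                (hr.tailRule a).measurable (hr.tailRule a).nonneg (hr.tailRule a).le_one) (htail a)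
      _ ≤ t 0 := by simpa using ht 0

theorem integral_payoff_le_of_approx_supersolution {n : ℕ} (Q : Fin n → Measure ℝ)
    [∀ j, IsProbabilityMeasure (Q j)] (hQ : ∀ j, Integrable (fun x : ℝ => x) (Q j))
    {r : ℕ → (Fin n → ℝ) → ℝ} (hr : IsStoppingRule n r) {t : ℕ → ℝ} {δ : ℝ} (hδ : 0 ≤ δ)
    (htn : 0 ≤ t n) (ht : ∀ j : Fin n, ∫ x, max (t (j + 1)) x ∂Q j ≤ t j + δ) :
    ∫ x, payoff n r x ∂Measure.pi Q ≤ t 0 + n * δ := by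
  -- raise the threshold after stage `i` by the slack `(n - i) δ` still to be spent
  have key := integral_payoff_le_of_supersolution Q hQ hr (t := fun i => t i + (n - i) * δ)
    (by simpa using htn) fun j => by
      have hj : ((j : ℕ) : ℝ) + 1 ≤ n := by exact_mod_cast j.isLt
      calc ∫ x, max (t (j + 1) + (n - ((j + 1 : ℕ) : ℝ)) * δ) x ∂Q j
          ≤ ∫ x, max (t (j + 1)) x ∂Q j + (n - ((j + 1 : ℕ) : ℝ)) * δ :=
            integral_max_add_le (hQ j) _ (by push_cast; nlinarith)
        _ ≤ t j + (n - j) * δ := by push_cast; linarith [ht j]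
  simpa using key

theorem robustT_self (Ps : ℕ → Set (Measure ℝ)) (n : ℕ) : robustT Ps n n = 0 := by
  simp [robustT, robustTAux]

theorem robustT_of_lt (Ps : ℕ → Set (Measure ℝ)) {n i : ℕ} (hi : i < n) :
    robustT Ps n i = sInf ((fun P => ∫ x, max (robustT Ps n (i + 1)) x ∂P) '' Ps (i + 1)) := by
  rw [robustT, show n - i = n - (i + 1) + 1 by omega, robustTAux,
    show n - (n - (i + 1)) = i + 1 by omega]
  rfl

theorem robustT_nonneg (Ps : ℕ → Set (Measure ℝ)) (n i : ℕ) : 0 ≤ robustT Ps n i := by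
  suffices ∀ k, 0 ≤ robustTAux Ps n k from this _
  intro k
  induction k with
  | zero => rfl
  | succ k ih =>
    refine Real.sInf_nonneg ?_
    rintro _ ⟨P, -, rfl⟩
    exact integral_nonneg fun x => ih.trans (le_max_left _ _)

theorem exists_integral_max_robustT_lt (Ps : ℕ → Set (Measure ℝ)) {n i : ℕ} (hi : i < n)
    (hne : (Ps (i + 1)).Nonempty) {δ : ℝ} (hδ : 0 < δ) :
    ∃ P ∈ Ps (i + 1), ∫ x, max (robustT Ps n (i + 1)) x ∂P < robustT Ps n i + δ := by
  have hlt : robustT Ps n i < robustT Ps n i + δ := lt_add_of_pos_right _ hδ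
  rw [robustT_of_lt Ps hi] at hlt
  obtain ⟨_, ⟨P, hP, rfl⟩, hPlt⟩ := exists_lt_of_csInf_lt (hne.image _) hlt
  exact ⟨P, hP, by rwa [← robustT_of_lt Ps hi] at hPlt⟩

theorem exists_forall_integral_max_robustT_lt (Ps : ℕ → Set (Measure ℝ)) {n : ℕ}
    (hne : ∀ i < n, (Ps (i + 1)).Nonempty) {δ : ℝ} (hδ : 0 < δ) :
    ∃ P : ℕ → Measure ℝ, ∀ i < n, P (i + 1) ∈ Ps (i + 1) ∧
      ∫ x, max (robustT Ps n (i + 1)) x ∂P (i + 1) < robustT Ps n i + δ := by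
  have (i : ℕ) : ∃ P : Measure ℝ, i < n →
      P ∈ Ps (i + 1) ∧ ∫ x, max (robustT Ps n (i + 1)) x ∂P < robustT Ps n i + δ := by
    by_cases hi : i < n
    · obtain ⟨P, hP⟩ := exists_integral_max_robustT_lt Ps hi (hne i hi) hδ
      exact ⟨P, fun _ => hP⟩
    · exact ⟨0, fun h => absurd h hi⟩
  choose P hP using this
  exact ⟨fun i => P (i - 1), hP⟩

theorem stmt1_general (n : ℕ) (Ps : ℕ → Set (Measure ℝ))
    (hprob : ∀ i, 1 ≤ i → i ≤ n → ∀ P ∈ Ps i, IsProbabilityMeasure P)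
    (hint : ∀ i, 1 ≤ i → i ≤ n → ∀ P ∈ Ps i, Integrable (fun x : ℝ => x) P)
    -- a randomized stopping rule: `r i x` is the probability of accepting offer `i`
    -- (coordinate `j : Fin n` corresponds to offer `j+1`)
    (r : ℕ → (Fin n → ℝ) → ℝ)
    (hr_meas : ∀ i, Measurable (r i))
    (hr01 : ∀ i x, 0 ≤ r i x ∧ r i x ≤ 1)
    -- `r i` depends only on the first `i` offer values
    (hr_adapted : ∀ i (x y : Fin n → ℝ),
      (∀ j : Fin n, j.1 + 1 ≤ i → x j = y j) → r i x = r i y) :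
    sInf {v : ℝ | ∃ P : ℕ → Measure ℝ, (∀ i, 1 ≤ i → i ≤ n → P i ∈ Ps i) ∧
        v = ∫ x, (∑ j : Fin n, x j * r (j.1 + 1) x *
              ∏ k ∈ Finset.Iio j, (1 - r (k.1 + 1) x))
            ∂(Measure.pi fun j : Fin n => P (j.1 + 1))} ≤ robustT Ps n 0 := by
  refine Real.sInf_le_of_forall_exists_lt (robustT_nonneg Ps n 0) ?_
  rintro ⟨_, P₀, hP₀, -⟩ ε hε
  have hδ : 0 < ε / (n + 1) := by positivity
  obtain ⟨P, hP⟩ := exists_forall_integral_max_robustT_lt Ps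
    (fun i hi => ⟨P₀ (i + 1), hP₀ _ (by omega) hi⟩) hδ
  have (j : Fin n) : IsProbabilityMeasure (P (j + 1)) :=
    hprob _ (by omega) j.isLt _ (hP j j.isLt).1
  refine ⟨_, ⟨P, fun i h1 h2 => ?_, rfl⟩, ?_⟩
  · obtain ⟨i, rfl⟩ := Nat.exists_eq_add_of_le' h1
    exact (hP i h2).1
  calc ∫ x, payoff n r x ∂Measure.pi (fun j : Fin n => P (j + 1))
      ≤ robustT Ps n 0 + n * (ε / (n + 1)) :=
        integral_payoff_le_of_approx_supersolution _
          (fun j => hint _ (by omega) j.isLt _ (hP j j.isLt).1)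
          ⟨hr_meas, fun i x => (hr01 i x).1, fun i x => (hr01 i x).2, hr_adapted⟩ hδ.le
          (by simp [robustT_self]) fun j => (hP j j.isLt).2.le
    _ < robustT Ps n 0 + ε := by
        rw [mul_div_assoc', add_lt_add_iff_left, div_lt_iff₀ (by positivity)]
        linarith

theorem stmt1 (n : ℕ) (hn : 1 ≤ n) (Ps : ℕ → Set (Measure ℝ))
    (hne : ∀ i, 1 ≤ i → i ≤ n → (Ps i).Nonempty)
    (hprob : ∀ i, 1 ≤ i → i ≤ n → ∀ P ∈ Ps i, IsProbabilityMeasure P)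
    (hsupp : ∀ i, 1 ≤ i → i ≤ n → ∀ P ∈ Ps i, P (Set.Ici (0 : ℝ)) = 1)
    (hint : ∀ i, 1 ≤ i → i ≤ n → ∀ P ∈ Ps i, Integrable (fun x : ℝ => x) P)
    -- a randomized stopping rule: `r i x` is the probability of accepting offer `i`
    -- (coordinate `j : Fin n` corresponds to offer `j+1`)
    (r : ℕ → (Fin n → ℝ) → ℝ)
    (hr_meas : ∀ i, Measurable (r i))
    (hr01 : ∀ i x, 0 ≤ r i x ∧ r i x ≤ 1)
    -- `r i` depends only on the first `i` offer values
    (hr_adapted : ∀ i (x y : Fin n → ℝ),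
      (∀ j : Fin n, j.1 + 1 ≤ i → x j = y j) → r i x = r i y) :
    sInf {v : ℝ | ∃ P : ℕ → Measure ℝ, (∀ i, 1 ≤ i → i ≤ n → P i ∈ Ps i) ∧
        v = ∫ x, (∑ j : Fin n, x j * r (j.1 + 1) x *
              ∏ k ∈ Finset.Iio j, (1 - r (k.1 + 1) x))
            ∂(Measure.pi fun j : Fin n => P (j.1 + 1))} ≤ robustT Ps n 0 :=
  stmt1_general n Ps hprob hint r hr_meas hr01 hr_adapted
end

section
/- Let n ∈ ℕ, let 0 < μ < L and 0 ≤ d ≤ 2μ(L − μ)/L. Take 𝒫ᵢ = P(μ,d,L) for all i = 1,…,n. Then the robust thresholds satisfy T(i) = 2μ²/(2μ − d) − (2μ²/(2μ − d) − μ)·(d/(2μ))^{n−1−i} for every i with 0 ≤ i ≤ n − 1, and T(n) = 0. -/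
open MeasureTheory

/-- `P(μ,d,L)`: Borel probability measures supported in `[0,L]` with mean `μ`
and mean absolute deviation `d`. -/
def PmdL (μ d L : ℝ) : Set (Measure ℝ) :=
  {P | IsProbabilityMeasure P ∧ P (Set.Icc 0 L) = 1 ∧
       (∫ x, x ∂P) = μ ∧ (∫ x, |x - μ| ∂P) = d}

/-!
Let `q = d / (2μ)` and `M = 2μ² / (2μ - d)`, so that `(1 - q) M = μ` and, by the bound on `d`,
`μ ≤ M ≤ L`. For `t = 0` or `μ ≤ t ≤ M`, the worst case of `E[max t X]` over `P(μ,d,L)` is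
`μ + q t`: it is a lower bound because `max t x` dominates an affine function of `x` and
`|x - μ|` on `[0, ∞)`, and it is attained by the two-point law `q δ₀ + (1 - q) δ_M`, at whose
atoms the two functions agree. Hence `T(i) = μ + q T(i+1)` starting from `T(n) = 0`, and the
closed form is the solution of this affine recursion with fixed point `M`.
-/

open Set

section TwoPoint

variable {α : Type*} [MeasurableSpace α]

noncomputable def twoPoint (p : ℝ) (a b : α) : Measure α :=
  ENNReal.ofReal p • Measure.dirac a + ENNReal.ofReal (1 - p) • Measure.dirac b

lemma twoPoint_apply_of_mem {p : ℝ} (hp0 : 0 ≤ p) (hp1 : p ≤ 1) {a b : α} {s : Set α}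
    (ha : a ∈ s) (hb : b ∈ s) : twoPoint p a b s = 1 := by
  rw [twoPoint, Measure.add_apply, Measure.smul_apply, Measure.smul_apply,
    Measure.dirac_apply_of_mem ha, Measure.dirac_apply_of_mem hb, smul_eq_mul, smul_eq_mul,
    mul_one, mul_one, ← ENNReal.ofReal_add hp0 (sub_nonneg.2 hp1)]
  simp

lemma isProbabilityMeasure_twoPoint {p : ℝ} (hp0 : 0 ≤ p) (hp1 : p ≤ 1) (a b : α) :
    IsProbabilityMeasure (twoPoint p a b) :=
  ⟨twoPoint_apply_of_mem hp0 hp1 (mem_univ a) (mem_univ b)⟩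

lemma integral_twoPoint [MeasurableSingletonClass α] {p : ℝ} (hp0 : 0 ≤ p) (hp1 : p ≤ 1)
    (a b : α) (f : α → ℝ) :
    ∫ x, f x ∂twoPoint p a b = p * f a + (1 - p) * f b := by
  rw [twoPoint, integral_add_measure
      ((integrable_dirac enorm_lt_top).smul_measure ENNReal.ofReal_ne_top)
      ((integrable_dirac enorm_lt_top).smul_measure ENNReal.ofReal_ne_top),
    integral_smul_measure, integral_smul_measure, integral_dirac, integral_dirac,
    ENNReal.toReal_ofReal hp0, ENNReal.toReal_ofReal (sub_nonneg.2 hp1), smul_eq_mul, smul_eq_mul]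

end TwoPoint

section PmdL

variable {μ d L : ℝ} {P : Measure ℝ}

lemma ae_mem_Icc_of_mem_PmdL (hP : P ∈ PmdL μ d L) : ∀ᵐ x ∂P, x ∈ Icc 0 L := by
  have := hP.1
  rw [ae_mem_iff_measure_eq measurableSet_Icc.nullMeasurableSet, hP.2.1, measure_univ]

lemma integrable_of_mem_PmdL (hP : P ∈ PmdL μ d L) {f : ℝ → ℝ} (hf : Continuous f) :
    Integrable f P := by
  have := hP.1
  rw [← Measure.restrict_eq_self_of_ae_mem (ae_mem_Icc_of_mem_PmdL hP)]
  exact hf.continuousOn.integrableOn_compact isCompact_Icc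

end PmdL

/- The minorant is affine in `x` and `|x - μ|`, so its integral is fixed by the mean and the
mean absolute deviation. -/
lemma affine_abs_le_max {μ t x : ℝ} (hμ : 0 < μ) (ht : t = 0 ∨ μ ≤ t) (hx : 0 ≤ x) :
    t / 2 + (1 - t / (2 * μ)) * x + t / (2 * μ) * |x - μ| ≤ max t x := by
  rcases le_or_gt x μ with hxμ | hμx
  · rw [abs_of_nonpos (sub_nonpos.2 hxμ)]
    rcases ht with rfl | hμt
    · simp
    · have key : t / 2 + (1 - t / (2 * μ)) * x + t / (2 * μ) * -(x - μ)
          = t - x * (t - μ) / μ := by field_simp; ring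
      rw [key]
      exact (sub_le_self _ (by have := sub_nonneg.2 hμt; positivity)).trans (le_max_left t x)
  · rw [abs_of_pos (sub_pos.2 hμx)]
    refine le_of_eq_of_le ?_ (le_max_right t x)
    field_simp; ring

lemma add_div_mul_le_integral_max {μ d L t : ℝ} {P : Measure ℝ} (hP : P ∈ PmdL μ d L)
    (hμ : 0 < μ) (ht : t = 0 ∨ μ ≤ t) :
    μ + d / (2 * μ) * t ≤ ∫ x, max t x ∂P := by
  obtain ⟨_, -, hmean, hmad⟩ := id hP
  have hx : Integrable (fun x => x) P := integrable_of_mem_PmdL hP continuous_id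
  have habs : Integrable (fun x => |x - μ|) P := integrable_of_mem_PmdL hP (by fun_prop)
  calc μ + d / (2 * μ) * t
      = ∫ x, t / 2 + (1 - t / (2 * μ)) * x + t / (2 * μ) * |x - μ| ∂P := by
        rw [integral_add (f := fun x => t / 2 + (1 - t / (2 * μ)) * x)
            ((integrable_const _).add (hx.const_mul _)) (habs.const_mul _),
          integral_add (integrable_const _) (hx.const_mul _), integral_const,
          integral_const_mul, integral_const_mul, hmean, hmad, probReal_univ, one_smul]
        field_simp; ring
    _ ≤ ∫ x, max t x ∂P := by
        refine integral_mono_ae ((integrable_const _).add (hx.const_mul _) |>.add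
          (habs.const_mul _)) (integrable_of_mem_PmdL hP (by fun_prop)) ?_
        filter_upwards [ae_mem_Icc_of_mem_PmdL hP] with x hxI
        exact affine_abs_le_max hμ ht hxI.1

lemma le_two_mul_sq_div_sub {μ d : ℝ} (hμ : 0 < μ) (hd0 : 0 ≤ d) (hdμ : d < 2 * μ) :
    μ ≤ 2 * μ ^ 2 / (2 * μ - d) := by
  rw [le_div_iff₀ (sub_pos.2 hdμ)]; nlinarith

lemma twoPoint_mem_PmdL {μ d L : ℝ} (hμ : 0 < μ) (hd0 : 0 ≤ d) (hdμ : d < 2 * μ)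
    (hML : 2 * μ ^ 2 / (2 * μ - d) ≤ L) :
    twoPoint (d / (2 * μ)) 0 (2 * μ ^ 2 / (2 * μ - d)) ∈ PmdL μ d L := by
  have hq0 : 0 ≤ d / (2 * μ) := by positivity
  have hq1 : d / (2 * μ) ≤ 1 := (div_le_one (by positivity)).2 hdμ.le
  have hd2 : 2 * μ - d ≠ 0 := (sub_pos.2 hdμ).ne'
  have hμM := le_two_mul_sq_div_sub hμ hd0 hdμ
  refine ⟨isProbabilityMeasure_twoPoint hq0 hq1 _ _,
    twoPoint_apply_of_mem hq0 hq1 ⟨le_rfl, (hμ.trans_le hμM).le.trans hML⟩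
      ⟨(hμ.trans_le hμM).le, hML⟩, ?_, ?_⟩
  · rw [integral_twoPoint hq0 hq1]
    field_simp; ring
  · rw [integral_twoPoint hq0 hq1, abs_of_nonpos (by linarith), abs_of_nonneg (by linarith)]
    field_simp; ring

lemma sInf_integral_max_PmdL {μ d L t : ℝ} (hμ : 0 < μ) (hd0 : 0 ≤ d) (hdμ : d < 2 * μ)
    (hML : 2 * μ ^ 2 / (2 * μ - d) ≤ L) (ht : t = 0 ∨ μ ≤ t)
    (htM : t ≤ 2 * μ ^ 2 / (2 * μ - d)) :
    sInf ((fun P => ∫ x, max t x ∂P) '' PmdL μ d L) = μ + d / (2 * μ) * t := by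
  refine IsLeast.csInf_eq ⟨⟨_, twoPoint_mem_PmdL hμ hd0 hdμ hML, ?_⟩, ?_⟩
  · have ht0 : 0 ≤ t := by rcases ht with rfl | h <;> linarith
    dsimp only
    rw [integral_twoPoint (by positivity) ((div_le_one (by positivity)).2 hdμ.le),
      max_eq_left ht0, max_eq_right htM]
    field_simp [(sub_pos.2 hdμ).ne']; ring
  · rintro _ ⟨P, hP, rfl⟩
    exact add_div_mul_le_integral_max hP hμ ht

lemma robustTAux_PmdL_succ {μ d L : ℝ} (hμ : 0 < μ) (hd0 : 0 ≤ d) (hdμ : d < 2 * μ)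
    (hML : 2 * μ ^ 2 / (2 * μ - d) ≤ L) (n j : ℕ) :
    robustTAux (fun _ => PmdL μ d L) n (j + 1)
      = 2 * μ ^ 2 / (2 * μ - d) - (2 * μ ^ 2 / (2 * μ - d) - μ) * (d / (2 * μ)) ^ j := by
  have hd2 : 2 * μ - d ≠ 0 := (sub_pos.2 hdμ).ne'
  have hfix : (1 - d / (2 * μ)) * (2 * μ ^ 2 / (2 * μ - d)) = μ := by field_simp
  set M := 2 * μ ^ 2 / (2 * μ - d)
  set q := d / (2 * μ)
  have hμM : μ ≤ M := le_two_mul_sq_div_sub hμ hd0 hdμ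
  induction j with
  | zero =>
    rw [robustTAux, robustTAux,
      sInf_integral_max_PmdL hμ hd0 hdμ hML (.inl rfl) (hμ.le.trans hμM)]
    ring
  | succ j ih =>
    have hqj : q ^ j ≤ 1 := pow_le_one₀ (by positivity) ((div_le_one (by positivity)).2 hdμ.le)
    have hgap : 0 ≤ (M - μ) * q ^ j := mul_nonneg (sub_nonneg.2 hμM) (by positivity)
    rw [robustTAux, ih, sInf_integral_max_PmdL hμ hd0 hdμ hML
      (.inr (by nlinarith)) (sub_le_self _ hgap), pow_succ]
    linear_combination -hfix

theorem stmt4 (n : ℕ) (μ d L : ℝ) (hμ : 0 < μ) (hμL : μ < L) (hd0 : 0 ≤ d)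
    (hd : d ≤ 2 * μ * (L - μ) / L) :
    (∀ i : ℕ, i + 1 ≤ n →
      robustT (fun _ => PmdL μ d L) n i
        = 2 * μ ^ 2 / (2 * μ - d)
          - (2 * μ ^ 2 / (2 * μ - d) - μ) * (d / (2 * μ)) ^ (n - 1 - i)) ∧
    robustT (fun _ => PmdL μ d L) n n = 0 := by
  have hL : 0 < L := hμ.trans hμL
  have hdL : d * L ≤ 2 * μ * (L - μ) := (le_div_iff₀ hL).1 hd
  have hdμ : d < 2 * μ := by nlinarith
  have hML : 2 * μ ^ 2 / (2 * μ - d) ≤ L := by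
    rw [div_le_iff₀ (sub_pos.2 hdμ)]; linarith
  refine ⟨fun i hi => ?_, by rw [robustT, Nat.sub_self, robustTAux]⟩
  rw [robustT, show n - i = n - 1 - i + 1 by omega, robustTAux_PmdL_succ hμ hd0 hdμ hML]
end
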